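/- Let G = C_n(S_1) and H = C_m(S_2) be circulant graphs. Then the lexicographical product G[H] is isomorphic to a circulant graph; that is, there exists a set S ⊆ {1, …, ⌊nm/2⌋} such that G[H] ≅ C_{nm}(S). -/

import Mathlib

open Finset

variable {V : Type*}

/-- A facet of a collection of faces `Δ` is a maximal face. -/
def IsFacet (Δ : Set (Finset V)) (F : Finset V) : Prop :=
  F ∈ Δ ∧ ∀ G ∈ Δ, F ⊆ G → F = G

/-- A complex is pure if all facets have the same cardinality. -/
def IsPure (Δ : Set (Finset V)) : Prop :=
  ∀ F G, IsFacet Δ F → IsFacet Δ G → F.card = G.card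

/-- Deletion of a vertex from a complex. -/
def del (Δ : Set (Finset V)) (x : V) : Set (Finset V) := {F ∈ Δ | x ∉ F}

/-- Link of a vertex in a complex. -/
def link [DecidableEq V] (Δ : Set (Finset V)) (x : V) : Set (Finset V) :=
  {F ∈ Δ | x ∉ F ∧ insert x F ∈ Δ}

/-- `F : Fin s → Finset V` is a shelling order of the facets of `Δ`. -/
def IsShelling [DecidableEq V] (Δ : Set (Finset V)) {s : ℕ} (F : Fin s → Finset V) : Prop :=
  (∀ i, IsFacet Δ (F i)) ∧ (∀ G, IsFacet Δ G → ∃ i, F i = G) ∧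
  Function.Injective F ∧
  (∀ i j : Fin s, j < i → ∃ x ∈ F i \ F j, ∃ k, k < i ∧ F i \ F k = {x})

/-- A complex is shellable if it is pure and admits a shelling order of its facets. -/
def Shellable [DecidableEq V] (Δ : Set (Finset V)) : Prop :=
  IsPure Δ ∧ ∃ (s : ℕ) (F : Fin s → Finset V), IsShelling Δ F

/-- A pure complex is vertex decomposable if it is a simplex (unique facet), or some vertex
has pure, vertex decomposable deletion and link. -/
inductive VertexDecomposable [DecidableEq V] : Set (Finset V) → Prop
  | simplex (Δ : Set (Finset V)) (h : ∃! F, IsFacet Δ F) : VertexDecomposable Δ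
  | step (Δ : Set (Finset V)) (x : V)
      (hdp : IsPure (del Δ x)) (hlp : IsPure (link Δ x))
      (hd : VertexDecomposable (del Δ x)) (hl : VertexDecomposable (link Δ x)) :
      VertexDecomposable Δ

/-- The independence complex of a graph: all independent sets. -/
def indComplex (G : SimpleGraph V) : Set (Finset V) :=
  {F | ∀ v ∈ F, ∀ w ∈ F, ¬ G.Adj v w}

/-- The lexicographical product `G[H]`. -/
def lexProd {α β : Type*} (G : SimpleGraph α) (H : SimpleGraph β) :
    SimpleGraph (α × β) where
  Adj p q := G.Adj p.1 q.1 ∨ (p.1 = q.1 ∧ H.Adj p.2 q.2)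
  symm := by
    refine ⟨?_⟩
    rintro p q (h | ⟨h1, h2⟩)
    · exact Or.inl h.symm
    · exact Or.inr ⟨h1.symm, h2.symm⟩
  loopless := by
    refine ⟨?_⟩
    rintro p (h | ⟨_, h⟩)
    · exact G.irrefl h
    · exact H.irrefl h

/-- The independence number of a graph. -/
noncomputable def indepNum (G : SimpleGraph V) : ℕ :=
  sSup {n | ∃ F : Finset V, F ∈ indComplex G ∧ F.card = n}

/-- The expansion of a graph `G`, where vertex `v` is replaced by `s v` copies,
and distinct vertices `(i,j)` and `(k,l)` are adjacent iff `i ~ k` in `G` or `i = k`. -/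
def expansion (G : SimpleGraph V) (s : V → ℕ) : SimpleGraph (Σ v : V, Fin (s v)) where
  Adj p q := p ≠ q ∧ (G.Adj p.1 q.1 ∨ p.1 = q.1)
  symm := by
    refine ⟨?_⟩
    rintro p q ⟨h1, h2 | h2⟩
    · exact ⟨h1.symm, Or.inl h2.symm⟩
    · exact ⟨h1.symm, Or.inr h2.symm⟩
  loopless := by refine ⟨?_⟩; rintro p ⟨h, _⟩; exact h rfl

/-- The circulant graph `C_n(S)`: vertices `x_a`, `x_b` are adjacent iff
`|a-b| ∈ S` or `n - |a-b| ∈ S`. -/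
def circulant (n : ℕ) (S : Set ℕ) : SimpleGraph (Fin n) where
  Adj a b := a ≠ b ∧ ((max a.val b.val - min a.val b.val) ∈ S ∨
      (n - (max a.val b.val - min a.val b.val)) ∈ S)
  symm := by
    refine ⟨?_⟩
    rintro a b ⟨h1, h2⟩
    refine ⟨h1.symm, ?_⟩
    rwa [max_comm, min_comm]
  loopless := by refine ⟨?_⟩; rintro a ⟨h, _⟩; exact h rfl

/-!
Label the vertex `(a, b)` of `C_n(S₁)[C_m(S₂)]` by `a + n * b ∈ ℤ/nm`. Whether two vertices are
adjacent then depends only on the difference `z` of their labels: the first coordinates are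
adjacent iff `z mod n` is a connection of `C_n(S₁)`, and when they agree, `z = n * (b - d)` and the
second coordinates are adjacent iff `b - d` is a connection of `C_m(S₂)`. So the product is a
Cayley graph of `ℤ/nm` with a connection set closed under negation, i.e. a circulant graph.
-/

def IsConnection (N : ℕ) (S : Set ℕ) (z : ZMod N) : Prop :=
  z ≠ 0 ∧ (z.val ∈ S ∨ (-z).val ∈ S)

lemma isConnection_neg {N : ℕ} {S : Set ℕ} {z : ZMod N} :
    IsConnection N S (-z) ↔ IsConnection N S z := by
  simp only [IsConnection, neg_ne_zero, neg_neg, or_comm]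

lemma Fin.natCast_zmod_inj {N : ℕ} {x y : Fin N} : ((x : ℕ) : ZMod N) = (y : ℕ) ↔ x = y := by
  rw [ZMod.natCast_eq_natCast_iff', Nat.mod_eq_of_lt x.isLt, Nat.mod_eq_of_lt y.isLt, Fin.val_inj]

lemma circulant_adj_iff {N : ℕ} {S : Set ℕ} (x y : Fin N) :
    (circulant N S).Adj x y ↔ IsConnection N S ((x : ℕ) - (y : ℕ)) := by
  wlog hyx : y ≤ x generalizing x y
  · rw [SimpleGraph.adj_comm, this y x (by omega), ← neg_sub, isConnection_neg]
  rcases eq_or_ne x y with rfl | hxy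
  · simp [circulant, IsConnection]
  have : NeZero N := NeZero.of_pos x.pos
  have hyx : (y : ℕ) ≤ x := hyx
  have hne : ((x : ℕ) : ZMod N) - (y : ℕ) ≠ 0 :=
    sub_ne_zero.mpr (Fin.natCast_zmod_inj.not.mpr hxy)
  have hval : (((x : ℕ) : ZMod N) - (y : ℕ)).val = x - y := by
    rw [← Nat.cast_sub hyx, ZMod.val_cast_of_lt (by omega)]
  simp only [circulant, max_eq_left hyx, min_eq_right hyx, IsConnection, ZMod.neg_val, if_false,
    hval, ne_eq, hxy, hne, not_false_eq_true, true_and]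

def connectionSet (N : ℕ) (P : ZMod N → Prop) : Set ℕ :=
  {s | s ∈ Set.Icc 1 (N / 2) ∧ P s}

lemma isConnection_connectionSet_iff {N : ℕ} [NeZero N] {P : ZMod N → Prop}
    (hP : ∀ z, P (-z) ↔ P z) (z : ZMod N) :
    IsConnection N (connectionSet N P) z ↔ z ≠ 0 ∧ P z := by
  simp only [IsConnection, connectionSet, Set.mem_ofPred_eq, ZMod.natCast_zmod_val, hP]
  refine and_congr_right fun hz => ?_
  have hpos : z.val ≠ 0 := (ZMod.val_ne_zero z).mpr hz
  have hlt : z.val < N := z.val_lt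
  have hneg : (-z).val = N - z.val := by rw [ZMod.neg_val, if_neg hz]
  have hhalf : z.val ∈ Set.Icc 1 (N / 2) ∨ (-z).val ∈ Set.Icc 1 (N / 2) := by
    simp only [Set.mem_Icc, hneg]
    omega
  tauto

lemma circulant_connectionSet_adj {N : ℕ} {P : ZMod N → Prop} (hP : ∀ z, P (-z) ↔ P z)
    (x y : Fin N) :
    (circulant N (connectionSet N P)).Adj x y ↔ x ≠ y ∧ P ((x : ℕ) - (y : ℕ)) := by
  have : NeZero N := NeZero.of_pos x.pos
  rw [circulant_adj_iff, isConnection_connectionSet_iff hP, sub_ne_zero, Ne, Fin.natCast_zmod_inj]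

def IsLexConnection (n m : ℕ) (S₁ S₂ : Set ℕ) (z : ZMod (n * m)) : Prop :=
  IsConnection n S₁ (ZMod.castHom (dvd_mul_right n m) (ZMod n) z) ∨
    ∃ k : ℤ, z = n * k ∧ IsConnection m S₂ k

lemma isLexConnection_neg {n m : ℕ} {S₁ S₂ : Set ℕ} {z : ZMod (n * m)} :
    IsLexConnection n m S₁ S₂ (-z) ↔ IsLexConnection n m S₁ S₂ z := by
  unfold IsLexConnection
  refine or_congr (by rw [map_neg, isConnection_neg]) ⟨?_, ?_⟩ <;> rintro ⟨k, hk, hconn⟩ <;>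
    refine ⟨-k, ?_, by rwa [Int.cast_neg, isConnection_neg]⟩
  · rw [← neg_neg z, hk]; push_cast; ring
  · rw [hk]; push_cast; ring

lemma ZMod.natCast_mul_intCast_inj {n m : ℕ} (hn : n ≠ 0) {x y : ℤ} :
    (n : ZMod (n * m)) * x = n * y ↔ (x : ZMod m) = y := by
  have h := ZMod.intCast_eq_intCast_iff_dvd_sub (n * x) (n * y) (n * m)
  push_cast at h
  rw [h, ZMod.intCast_eq_intCast_iff_dvd_sub, ← mul_sub,
    mul_dvd_mul_iff_left (Int.natCast_ne_zero.mpr hn)]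

lemma isLexConnection_iff_lexProd_adj {n m : ℕ} {S₁ S₂ : Set ℕ} (a c : Fin n) (b d : Fin m) :
    IsLexConnection n m S₁ S₂ ((a : ℕ) + n * (b : ℕ) - ((c : ℕ) + n * (d : ℕ)) : ZMod (n * m)) ↔
      (lexProd (circulant n S₁) (circulant m S₂)).Adj (a, b) (c, d) := by
  set π := ZMod.castHom (dvd_mul_right n m) (ZMod n)
  have hπ : π ((a : ℕ) + n * (b : ℕ) - ((c : ℕ) + n * (d : ℕ))) =
      ((a : ℕ) : ZMod n) - (c : ℕ) := by
    simp [π]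
  have hπn (k : ℤ) : π (n * k) = 0 := by simp [π]
  change _ ↔ (circulant n S₁).Adj a c ∨ (a = c ∧ (circulant m S₂).Adj b d)
  rw [IsLexConnection, hπ, circulant_adj_iff, circulant_adj_iff]
  refine or_congr_right ⟨?_, ?_⟩
  · rintro ⟨k, hk, hconn⟩
    obtain rfl : a = c := by
      have h := hπn k
      rwa [← hk, hπ, sub_eq_zero, Fin.natCast_zmod_inj] at h
    refine ⟨rfl, ?_⟩
    have h : (n : ZMod (n * m)) * (((b : ℕ) : ℤ) - (d : ℕ) : ℤ) = n * k := by
      rw [← hk]; push_cast; ring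
    rw [ZMod.natCast_mul_intCast_inj a.pos.ne'] at h
    rwa [← h, Int.cast_sub, Int.cast_natCast, Int.cast_natCast] at hconn
  · rintro ⟨rfl, hconn⟩
    exact ⟨(b : ℤ) - d, by push_cast; ring, by push_cast; exact hconn⟩

def finProdFinEquivAddMul (n m : ℕ) : Fin n × Fin m ≃ Fin (n * m) :=
  (Equiv.prodComm _ _).trans (finProdFinEquiv.trans (finCongr (mul_comm m n)))

lemma finProdFinEquivAddMul_val {n m : ℕ} (a : Fin n) (b : Fin m) :
    (finProdFinEquivAddMul n m (a, b) : ℕ) = a + n * b :=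
  rfl

theorem stmt16_general (n m : ℕ) (S₁ S₂ : Set ℕ) :
    ∃ S : Set ℕ, S ⊆ Set.Icc 1 (n * m / 2) ∧
      Nonempty (lexProd (circulant n S₁) (circulant m S₂) ≃g circulant (n * m) S) := by
  refine ⟨connectionSet (n * m) (IsLexConnection n m S₁ S₂), fun _ hs => hs.1,
    ⟨⟨finProdFinEquivAddMul n m, ?_⟩⟩⟩
  rintro ⟨a, b⟩ ⟨c, d⟩
  rw [circulant_connectionSet_adj (fun _ => isLexConnection_neg),
    (finProdFinEquivAddMul n m).injective.ne_iff, finProdFinEquivAddMul_val,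
    finProdFinEquivAddMul_val]
  push_cast
  rw [isLexConnection_iff_lexProd_adj]
  exact and_iff_right_of_imp SimpleGraph.Adj.ne

theorem stmt16 (n m : ℕ) (hn : 1 ≤ n) (hm : 1 ≤ m) (S₁ S₂ : Set ℕ)
    (hS₁ : S₁ ⊆ Set.Icc 1 (n / 2)) (hS₂ : S₂ ⊆ Set.Icc 1 (m / 2)) :
    ∃ S : Set ℕ, S ⊆ Set.Icc 1 (n * m / 2) ∧
      Nonempty (lexProd (circulant n S₁) (circulant m S₂) ≃g circulant (n * m) S) :=
  stmt16_general n m S₁ S₂
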